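/- The PMA update operator satisfies postulate U5: for all sets of worlds K and formulas φ, ψ, Mod(K ⋄ φ) ∩ [ψ] ⊆ Mod(K ⋄ (φ ∧ ψ)) where [φ ∧ ψ] = [φ] ∩ [ψ]. -/

import Mathlib

variable {V : Type} [Fintype V]

/-- The set of variables on which two worlds differ. -/
def diff (ω₁ ω₂ : V → Bool) : Set V := {v | ω₁ v ≠ ω₂ v}

/-- The ≤_ω-minimal models of Φ (PMA closeness to ω). -/
def pmaMin (ω : V → Bool) (Φ : Set (V → Bool)) : Set (V → Bool) :=
  {ω2 ∈ Φ | ∀ ω3 ∈ Φ, diff ω3 ω ⊆ diff ω2 ω → diff ω3 ω = diff ω2 ω}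

/-- Pointwise PMA update. -/
def pmaUpd (K Φ : Set (V → Bool)) : Set (V → Bool) := ⋃ ω ∈ K, pmaMin ω Φ

theorem mem_pmaMin_of_subset {V : Type} {ω ω' : V → Bool} {Φ Φ' : Set (V → Bool)} (hΦ : Φ' ⊆ Φ)
    (hmin : ω' ∈ pmaMin ω Φ) (hω' : ω' ∈ Φ') : ω' ∈ pmaMin ω Φ' :=
  ⟨hω', fun ω₃ h₃ => hmin.2 ω₃ (hΦ h₃)⟩

theorem pmaMin_inter_subset {V : Type} (ω : V → Bool) (Φ Ψ : Set (V → Bool)) :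
    pmaMin ω Φ ∩ Ψ ⊆ pmaMin ω (Φ ∩ Ψ) :=
  fun _ ⟨hmin, hΨ⟩ => mem_pmaMin_of_subset Set.inter_subset_left hmin ⟨hmin.1, hΨ⟩

/-- PMA update satisfies postulate U5. -/
theorem pma_U5 (K Φ Ψ : Set (V → Bool)) :
    pmaUpd K Φ ∩ Ψ ⊆ pmaUpd K (Φ ∩ Ψ) := by
  rintro ω' ⟨hupd, hΨ⟩
  simp only [pmaUpd, Set.mem_iUnion₂] at hupd ⊢
  obtain ⟨ω, hω, hmin⟩ := hupd
  exact ⟨ω, hω, pmaMin_inter_subset ω Φ Ψ ⟨hmin, hΨ⟩⟩
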